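/- arXiv:0805.0787 — 2 statements merged into one kernel-verified Lean document; each statement's English description precedes it below -/
import Mathlib

section
/- Let λ_1, …, λ_k be algebraic numbers such that every complex conjugate (Galois embedding into C) of λ_i has absolute value q^{t_i/2} for natural numbers t_i, where q > 1 is a natural number, and let e_1, …, e_k ∈ {1, -1} satisfy e_1 λ_1^s + ⋯ + e_k λ_k^s = 0 for all integers s ≥ 1. Then e_1 v^{t_1} + e_2 v^{t_2} + ⋯ + e_k v^{t_k} = 0 in Z[v, v^{-1}]. -/
noncomputable section

open Finset

/-- Key lemma: if `∑ cᵢ λᵢ^s = 0` for all `s ≥ 1` and the `λᵢ` are nonzero, then for each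
complex value `μ` the sum of the `cᵢ` over the fiber `λᵢ = μ` vanishes. -/
lemma key_fiber {k : ℕ} (lam : Fin k → ℂ) (c : Fin k → ℂ)
    (hne : ∀ i, lam i ≠ 0)
    (hsum : ∀ s : ℕ, 1 ≤ s → ∑ i, c i * lam i ^ s = 0) (μ : ℂ) :
    ∑ i ∈ univ.filter (fun i => lam i = μ), c i = 0 := by
  classical
  by_cases hμ : μ ∈ univ.image lam
  · -- linear independence of characters `n ↦ ν ^ n`
    have hli : LinearIndependent ℂ (fun ν : ℂ => ⇑(powersHom ℂ ν)) :=
      (linearIndependent_monoidHom (Multiplicative ℕ) ℂ).comp _ (powersHom ℂ).injective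
    set d : ℂ → ℂ := fun ν => ∑ i ∈ univ.filter (fun i => lam i = ν), c i * lam i with hd
    have hzero : ∑ ν ∈ univ.image lam, d ν • (fun n : Multiplicative ℕ => ν ^ n.toAdd) = 0 := by
      funext n
      have h1 : (1 : ℕ) ≤ n.toAdd + 1 := Nat.le_add_left 1 _
      have := hsum (n.toAdd + 1) h1
      calc (∑ ν ∈ univ.image lam, d ν • fun n : Multiplicative ℕ => ν ^ n.toAdd) n
          = ∑ ν ∈ univ.image lam, d ν * ν ^ n.toAdd := by
            simp [Finset.sum_apply]
        _ = ∑ ν ∈ univ.image lam, ∑ i ∈ univ.filter (fun i => lam i = ν),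
              c i * lam i ^ (n.toAdd + 1) := by
            refine Finset.sum_congr rfl fun ν _ => ?_
            rw [hd, Finset.sum_mul]
            refine Finset.sum_congr rfl fun i hi => ?_
            have : lam i = ν := (Finset.mem_filter.mp hi).2
            rw [this, pow_succ]; ring
        _ = ∑ i, c i * lam i ^ (n.toAdd + 1) :=
            Finset.sum_fiberwise_of_maps_to (fun i _ => Finset.mem_image_of_mem lam (mem_univ i)) _
        _ = 0 := this
    have hdμ : d μ = 0 := by
      have := linearIndependent_iff'.mp hli (univ.image lam) d ?_ μ hμ
      · exact this
      · exact hzero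
    -- `d μ = (∑ c i) * μ` and `μ ≠ 0`
    obtain ⟨i₀, _, hi₀⟩ := Finset.mem_image.mp hμ
    have hμne : μ ≠ 0 := hi₀ ▸ hne i₀
    have : d μ = (∑ i ∈ univ.filter (fun i => lam i = μ), c i) * μ := by
      rw [hd, Finset.sum_mul]
      exact Finset.sum_congr rfl fun i hi => by
        rw [(Finset.mem_filter.mp hi).2]
    rw [this] at hdμ
    exact (mul_eq_zero.mp hdμ).resolve_right hμne
  · rw [Finset.filter_eq_empty_iff.mpr, Finset.sum_empty]
    intro i _ h
    exact hμ (h ▸ Finset.mem_image_of_mem lam (mem_univ i))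

/-- if algebraic numbers `λᵢ` have all their complex conjugates of absolute
value `q^(tᵢ/2)` and signs `eᵢ ∈ {1,-1}` satisfy `Σ eᵢ λᵢˢ = 0` for all `s ≥ 1`, then
`Σ eᵢ v^(tᵢ) = 0` in `ℤ[v,v⁻¹]`. -/
theorem statement10 (q : ℕ) (hq : 2 ≤ q) (k : ℕ) (lam : Fin k → ℂ) (t : Fin k → ℕ)
    (e : Fin k → ℤ) (he : ∀ i, e i = 1 ∨ e i = -1)
    (halg : ∀ i, IsAlgebraic ℚ (lam i))
    (habs : ∀ (i : Fin k) (z : ℂ), Polynomial.aeval z (minpoly ℚ (lam i)) = 0 →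
      ‖z‖ = (q : ℝ) ^ ((t i : ℝ) / 2))
    (hsum : ∀ s : ℕ, 1 ≤ s → ∑ i, (e i : ℂ) * lam i ^ s = 0) :
    ∑ i, LaurentPolynomial.C (e i) * LaurentPolynomial.T (t i : ℤ)
      = (0 : LaurentPolynomial ℤ) := by
  classical
  -- each λᵢ has absolute value q^(tᵢ/2)
  have habs' : ∀ i, ‖lam i‖ = (q : ℝ) ^ ((t i : ℝ) / 2) := fun i =>
    habs i (lam i) (minpoly.aeval ℚ (lam i))
  have hqpos : (0 : ℝ) < (q : ℝ) := by positivity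
  have hne : ∀ i, lam i ≠ 0 := by
    intro i h
    have := habs' i
    rw [h, norm_zero] at this
    exact absurd this.symm (ne_of_gt (Real.rpow_pos_of_pos hqpos _))
  -- equal λ's have equal t's
  have ht : ∀ i j, lam i = lam j → t i = t j := by
    intro i j h
    have h1 : (q : ℝ) ^ ((t i : ℝ) / 2) = (q : ℝ) ^ ((t j : ℝ) / 2) := by
      rw [← habs' i, ← habs' j, h]
    have hq1 : (1 : ℝ) < (q : ℝ) := by exact_mod_cast hq.trans_lt' one_lt_two
    have := (Real.strictMono_rpow_of_base_gt_one hq1).injective h1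
    have : (t i : ℝ) = t j := by linarith
    exact_mod_cast this
  -- fiberwise sums of the eᵢ vanish
  have hfib : ∀ μ : ℂ, ∑ i ∈ Finset.univ.filter (fun i => lam i = μ), e i = 0 := by
    intro μ
    have := key_fiber lam (fun i => (e i : ℂ)) hne hsum μ
    exact_mod_cast this
  -- regroup the Laurent polynomial sum over fibers
  rw [← Finset.sum_fiberwise_of_maps_to
    (fun i _ => Finset.mem_image_of_mem lam (Finset.mem_univ i))
    (fun i => LaurentPolynomial.C (e i) * LaurentPolynomial.T (t i : ℤ))]
  refine Finset.sum_eq_zero fun μ hμ => ?_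
  obtain ⟨j, _, hj⟩ := Finset.mem_image.mp hμ
  calc ∑ i ∈ Finset.univ.filter (fun i => lam i = μ),
        LaurentPolynomial.C (e i) * LaurentPolynomial.T (t i : ℤ)
      = ∑ i ∈ Finset.univ.filter (fun i => lam i = μ),
        LaurentPolynomial.C (e i) * LaurentPolynomial.T (t j : ℤ) := by
        refine Finset.sum_congr rfl fun i hi => ?_
        have : lam i = μ := (Finset.mem_filter.mp hi).2
        rw [ht i j (this.trans hj.symm)]
    _ = LaurentPolynomial.C (∑ i ∈ Finset.univ.filter (fun i => lam i = μ), e i)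
          * LaurentPolynomial.T (t j : ℤ) := by rw [map_sum, Finset.sum_mul]
    _ = 0 := by rw [hfib μ, map_zero, zero_mul]
end
end

section
/- For each irreducible representation E of the finite Coxeter group W (extended to a representation E^v of the Hecke algebra over Q(v)), the element C'_E = Σ_{u in W} v^{-2 l(u)} tr(T_{u^{-1}}, E^v) T_u lies in the center of the Hecke algebra H^v = Q(v) ⊗ H. -/
noncomputable section

set_option synthInstance.maxHeartbeats 1000000 in
set_option maxHeartbeats 2000000 in
theorem statement11_aux {B W H V : Type} [Group W] {M : CoxeterMatrix B} (cs : CoxeterSystem M W)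
    [Fintype W] [DecidableEq W]
    [Ring H] [Algebra (RatFunc ℚ) H]
    (Tb : W → H) (bT : Module.Basis W (RatFunc ℚ) H) (hbT : ∀ w, bT w = Tb w)
    (hmul : ∀ w w' : W, cs.length (w * w') = cs.length w + cs.length w' →
      Tb w * Tb w' = Tb (w * w'))
    (hquad : ∀ i : B, (Tb (cs.simple i) + 1) *
      (Tb (cs.simple i) - algebraMap (RatFunc ℚ) H ((RatFunc.X : RatFunc ℚ) ^ 2)) = 0)
    [AddCommGroup V] [Module (RatFunc ℚ) V] [FiniteDimensional (RatFunc ℚ) V]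
    (ρ : H →ₐ[RatFunc ℚ] Module.End (RatFunc ℚ) V) :
    let CE' := ∑ u : W, (((RatFunc.X : RatFunc ℚ) ^ (-(2 * (cs.length u) : ℤ))) *
      LinearMap.trace (RatFunc ℚ) V (ρ (Tb u⁻¹))) • Tb u
    ∀ h : H, CE' * h = h * CE' := by
  classical
  intro CE'
  set X : RatFunc ℚ := RatFunc.X with hXdef
  have hX : X ≠ 0 := RatFunc.X_ne_zero
  set q : RatFunc ℚ := X ^ 2 with hqdef
  have hq0 : q ≠ 0 := pow_ne_zero _ hX
  set f : H → RatFunc ℚ := fun h => LinearMap.trace (RatFunc ℚ) V (ρ h) with hfdef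
  have ftr : ∀ a b : H, f (a * b) = f (b * a) := by
    intro a b
    simp only [hfdef, map_mul]
    exact LinearMap.trace_mul_comm _ _ _
  -- the coefficients
  set c : W → RatFunc ℚ := fun u => X ^ (-(2 * (cs.length u) : ℤ)) * f (Tb u⁻¹) with hcdef
  have hCE' : CE' = ∑ u : W, c u • Tb u := rfl
  clear_value CE'
  -- Tb 1 = 1
  have hT1 : Tb (1 : W) = 1 := by
    have hTmul1 : ∀ w : W, Tb 1 * Tb w = Tb w := by
      intro w
      have := hmul 1 w (by simp)
      simpa using this
    have hall : LinearMap.mulLeft (RatFunc ℚ) (Tb (1 : W)) = LinearMap.id := by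
      apply bT.ext
      intro w
      simp [hbT, hTmul1]
    have := congrArg (fun L => L (1 : H)) hall
    simpa using this
  -- quadratic relation in useful form
  have quad : ∀ i : B, Tb (cs.simple i) * Tb (cs.simple i)
      = q • Tb (cs.simple i) - Tb (cs.simple i) + algebraMap (RatFunc ℚ) H q := by
    intro i
    have h := hquad i
    have hA : Tb (cs.simple i) * algebraMap (RatFunc ℚ) H q
        = algebraMap (RatFunc ℚ) H q * Tb (cs.simple i) := (Algebra.commutes _ _).symm
    have expand : (Tb (cs.simple i) + 1) *
        (Tb (cs.simple i) - algebraMap (RatFunc ℚ) H q)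
        = Tb (cs.simple i) * Tb (cs.simple i)
          - Tb (cs.simple i) * algebraMap (RatFunc ℚ) H q + Tb (cs.simple i)
          - algebraMap (RatFunc ℚ) H q := by noncomm_ring
    rw [expand, hA] at h
    rw [Algebra.smul_def]
    linear_combination (norm := noncomm_ring) h
  -- multiplication rules
  have Lsmul : ∀ (i : B) (u : W), ¬ cs.IsLeftDescent u i →
      Tb (cs.simple i) * Tb u = Tb (cs.simple i * u) := by
    intro i u hd
    exact hmul _ _ (by rw [cs.not_isLeftDescent_iff.mp hd, cs.length_simple]; ring)
  have Rsmul : ∀ (i : B) (u : W), ¬ cs.IsRightDescent u i →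
      Tb u * Tb (cs.simple i) = Tb (u * cs.simple i) := by
    intro i u hd
    exact hmul _ _ (by rw [cs.not_isRightDescent_iff.mp hd, cs.length_simple])
  have Ldesc : ∀ (i : B) (u : W), cs.IsLeftDescent u i →
      Tb (cs.simple i) * Tb u
        = q • Tb (cs.simple i * u) + (q - 1) • Tb u := by
    intro i u hd
    have hnd : ¬ cs.IsLeftDescent (cs.simple i * u) i :=
      cs.isLeftDescent_iff_not_isLeftDescent_mul.mp hd
    have h1 : Tb (cs.simple i) * Tb (cs.simple i * u) = Tb u := by
      rw [Lsmul i _ hnd, cs.simple_mul_simple_cancel_left]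
    calc Tb (cs.simple i) * Tb u
        = Tb (cs.simple i) * (Tb (cs.simple i) * Tb (cs.simple i * u)) := by rw [h1]
      _ = (Tb (cs.simple i) * Tb (cs.simple i)) * Tb (cs.simple i * u) := by
          rw [mul_assoc]
      _ = (q • Tb (cs.simple i) - Tb (cs.simple i) + algebraMap (RatFunc ℚ) H q)
            * Tb (cs.simple i * u) := by rw [quad]
      _ = q • (Tb (cs.simple i) * Tb (cs.simple i * u))
            - Tb (cs.simple i) * Tb (cs.simple i * u) + q • Tb (cs.simple i * u) := by
          rw [add_mul, sub_mul, smul_mul_assoc, ← Algebra.smul_def]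
      _ = q • Tb u - Tb u + q • Tb (cs.simple i * u) := by rw [h1]
      _ = q • Tb (cs.simple i * u) + (q - 1) • Tb u := by
          rw [sub_smul, one_smul]; abel
  have Rdesc : ∀ (i : B) (u : W), cs.IsRightDescent u i →
      Tb u * Tb (cs.simple i)
        = q • Tb (u * cs.simple i) + (q - 1) • Tb u := by
    intro i u hd
    have hnd : ¬ cs.IsRightDescent (u * cs.simple i) i :=
      cs.isRightDescent_iff_not_isRightDescent_mul.mp hd
    have h1 : Tb (u * cs.simple i) * Tb (cs.simple i) = Tb u := by
      rw [Rsmul i _ hnd, cs.simple_mul_simple_cancel_right]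
    calc Tb u * Tb (cs.simple i)
        = Tb (u * cs.simple i) * (Tb (cs.simple i) * Tb (cs.simple i)) := by
          rw [← mul_assoc, h1]
      _ = Tb (u * cs.simple i) *
            (q • Tb (cs.simple i) - Tb (cs.simple i) + algebraMap (RatFunc ℚ) H q) := by
          rw [quad]
      _ = q • (Tb (u * cs.simple i) * Tb (cs.simple i))
            - Tb (u * cs.simple i) * Tb (cs.simple i) + q • Tb (u * cs.simple i) := by
          have hA : Tb (u * cs.simple i) * algebraMap (RatFunc ℚ) H q
              = q • Tb (u * cs.simple i) := by
            rw [← Algebra.commutes, ← Algebra.smul_def]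
          rw [mul_add, mul_sub, mul_smul_comm, hA]
      _ = q • Tb u - Tb u + q • Tb (u * cs.simple i) := by rw [h1]
      _ = q • Tb (u * cs.simple i) + (q - 1) • Tb u := by
          rw [sub_smul, one_smul]; abel
  -- T_s is invertible: S i is a two-sided inverse
  set S : B → H := fun i => q⁻¹ • (Tb (cs.simple i) - algebraMap (RatFunc ℚ) H q + 1)
    with hSdef
  have hTS : ∀ i : B, Tb (cs.simple i) * S i = 1 := by
    intro i
    have h1 : Tb (cs.simple i) * (Tb (cs.simple i) - algebraMap (RatFunc ℚ) H q + 1)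
        = algebraMap (RatFunc ℚ) H q := by
      have hc : Tb (cs.simple i) * algebraMap (RatFunc ℚ) H q
          = q • Tb (cs.simple i) := by rw [← Algebra.commutes, ← Algebra.smul_def]
      rw [mul_add, mul_sub, quad i, hc, mul_one]
      abel
    show Tb (cs.simple i) *
        (q⁻¹ • (Tb (cs.simple i) - algebraMap (RatFunc ℚ) H q + 1)) = 1
    rw [mul_smul_comm, h1, Algebra.smul_def, ← map_mul, inv_mul_cancel₀ hq0, map_one]
  have hST : ∀ i : B, S i * Tb (cs.simple i) = 1 := by
    intro i
    have h1 : (Tb (cs.simple i) - algebraMap (RatFunc ℚ) H q + 1) * Tb (cs.simple i)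
        = algebraMap (RatFunc ℚ) H q := by
      have hc : algebraMap (RatFunc ℚ) H q * Tb (cs.simple i)
          = q • Tb (cs.simple i) := by rw [← Algebra.smul_def]
      rw [add_mul, sub_mul, quad i, hc, one_mul]
      abel
    show (q⁻¹ • (Tb (cs.simple i) - algebraMap (RatFunc ℚ) H q + 1)) *
        Tb (cs.simple i) = 1
    rw [smul_mul_assoc, h1, Algebra.smul_def, ← map_mul, inv_mul_cancel₀ hq0, map_one]
  -- key conjugation invariance of f
  have fconj : ∀ (i : B) (a b : H),
      a * Tb (cs.simple i) = Tb (cs.simple i) * b → f a = f b := by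
    intro i a b hab
    calc f a = f (a * (Tb (cs.simple i) * S i)) := by rw [hTS, mul_one]
      _ = f ((a * Tb (cs.simple i)) * S i) := by rw [mul_assoc]
      _ = f (S i * (Tb (cs.simple i) * b)) := by rw [hab, ftr]
      _ = f ((S i * Tb (cs.simple i)) * b) := by rw [mul_assoc]
      _ = f b := by rw [hST, one_mul]
  -- linearity of f
  have fsmuladd : ∀ (a b : RatFunc ℚ) (x y : H), f (a • x + b • y) = a * f x + b * f y := by
    intro a b x y
    simp only [hfdef, map_add, map_smul, smul_eq_mul]
  -- power bookkeeping
  set P : W → RatFunc ℚ := fun u => X ^ (-(2 * (cs.length u) : ℤ)) with hPdef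
  have hc2 : ∀ u : W, c u = P u * f (Tb u⁻¹) := fun u => rfl
  have hX2 : X ^ (2 : ℤ) = q := by
    rw [hqdef, show ((2:ℤ)) = ((2:ℕ):ℤ) by norm_num, zpow_natCast]
  have hXm2 : X ^ (-2 : ℤ) = q⁻¹ := by
    rw [← hX2, zpow_neg]
  have hPup : ∀ u w : W, cs.length u = cs.length w + 1 → P u = P w * q⁻¹ := by
    intro u w hlen
    have he : (-(2 * (cs.length u) : ℤ)) = (-(2 * (cs.length w) : ℤ)) + (-2) := by
      rw [hlen]; push_cast; ring
    simp only [hPdef]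
    rw [he, zpow_add₀ hX, hXm2]
  have hPdown : ∀ u w : W, cs.length u + 1 = cs.length w → P u = P w * q := by
    intro u w hlen
    have he : (-(2 * (cs.length u) : ℤ)) = (-(2 * (cs.length w) : ℤ)) + 2 := by
      rw [← hlen]; push_cast; ring
    simp only [hPdef]
    rw [he, zpow_add₀ hX, hX2]
  -- commutation with the generators
  have comm_s : ∀ i : B, CE' * Tb (cs.simple i) = Tb (cs.simple i) * CE' := by
    intro i
    have hR : CE' * Tb (cs.simple i) = ∑ w : W,
        ((if cs.IsRightDescent (w * cs.simple i) i then q * c (w * cs.simple i)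
            else c (w * cs.simple i))
          + (if cs.IsRightDescent w i then (q - 1) * c w else 0)) • Tb w := by
      rw [hCE', Finset.sum_mul]
      have step : ∀ u : W, (c u • Tb u) * Tb (cs.simple i)
          = (if cs.IsRightDescent u i then q * c u else c u) • Tb (u * cs.simple i)
            + (if cs.IsRightDescent u i then (q - 1) * c u else 0) • Tb u := by
        intro u
        by_cases hd : cs.IsRightDescent u i
        · rw [if_pos hd, if_pos hd, smul_mul_assoc, Rdesc i u hd, smul_add, smul_smul,
            smul_smul, mul_comm (c u) q, mul_comm (c u) (q - 1)]
        · rw [if_neg hd, if_neg hd, smul_mul_assoc, Rsmul i u hd, zero_smul, add_zero]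
      rw [Finset.sum_congr rfl fun u _ => step u, Finset.sum_add_distrib]
      simp only [add_smul]
      rw [Finset.sum_add_distrib]
      congr 1
      refine Fintype.sum_equiv (Equiv.mulRight (cs.simple i)) _ _ fun u => ?_
      simp [cs.simple_mul_simple_cancel_right]
    have hL : Tb (cs.simple i) * CE' = ∑ w : W,
        ((if cs.IsLeftDescent (cs.simple i * w) i then q * c (cs.simple i * w)
            else c (cs.simple i * w))
          + (if cs.IsLeftDescent w i then (q - 1) * c w else 0)) • Tb w := by
      rw [hCE', Finset.mul_sum]
      have step : ∀ u : W, Tb (cs.simple i) * (c u • Tb u)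
          = (if cs.IsLeftDescent u i then q * c u else c u) • Tb (cs.simple i * u)
            + (if cs.IsLeftDescent u i then (q - 1) * c u else 0) • Tb u := by
        intro u
        by_cases hd : cs.IsLeftDescent u i
        · rw [if_pos hd, if_pos hd, mul_smul_comm, Ldesc i u hd, smul_add, smul_smul,
            smul_smul, mul_comm (c u) q, mul_comm (c u) (q - 1)]
        · rw [if_neg hd, if_neg hd, mul_smul_comm, Lsmul i u hd, zero_smul, add_zero]
      rw [Finset.sum_congr rfl fun u _ => step u, Finset.sum_add_distrib]
      simp only [add_smul]
      rw [Finset.sum_add_distrib]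
      congr 1
      refine Fintype.sum_equiv (Equiv.mulLeft (cs.simple i)) _ _ fun u => ?_
      simp [cs.simple_mul_simple_cancel_left]
    rw [hR, hL]
    refine Finset.sum_congr rfl fun w _ => ?_
    congr 1
    have hinv1 : (cs.simple i * w)⁻¹ = w⁻¹ * cs.simple i := by
      rw [mul_inv_rev, cs.inv_simple]
    have hinv2 : (w * cs.simple i)⁻¹ = cs.simple i * w⁻¹ := by
      rw [mul_inv_rev, cs.inv_simple]
    by_cases hDl : cs.IsLeftDescent w i <;> by_cases hDr : cs.IsRightDescent w i
    · -- both descents : coefficients c (w * s i) and c (s i * w) agree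
      have hRD : ¬ cs.IsRightDescent (w * cs.simple i) i :=
        cs.isRightDescent_iff_not_isRightDescent_mul.mp hDr
      have hLD : ¬ cs.IsLeftDescent (cs.simple i * w) i :=
        cs.isLeftDescent_iff_not_isLeftDescent_mul.mp hDl
      rw [if_neg hRD, if_neg hLD, if_pos hDr, if_pos hDl]
      have h₁ : ¬ cs.IsRightDescent (w⁻¹ * cs.simple i) i := by
        rw [← hinv1, cs.isRightDescent_inv_iff]
        exact hLD
      have h₂ : ¬ cs.IsLeftDescent (cs.simple i * w⁻¹) i := by
        rw [← hinv2, cs.isLeftDescent_inv_iff]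
        exact hRD
      have feq : f (Tb (w⁻¹ * cs.simple i)) = f (Tb (cs.simple i * w⁻¹)) := by
        refine fconj i _ _ ?_
        rw [Rsmul i _ h₁, Lsmul i _ h₂, cs.simple_mul_simple_cancel_right,
          cs.simple_mul_simple_cancel_left]
      have hlen1 : cs.length (cs.simple i * w) + 1 = cs.length w :=
        cs.isLeftDescent_iff.mp hDl
      have hlen2 : cs.length (w * cs.simple i) + 1 = cs.length w :=
        cs.isRightDescent_iff.mp hDr
      rw [hc2 (w * cs.simple i), hc2 (cs.simple i * w), hinv1, hinv2,
        hPdown _ w hlen2, hPdown _ w hlen1, feq]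
    · -- left descent, no right descent
      have hRD : cs.IsRightDescent (w * cs.simple i) i := by
        by_contra hc
        exact hDr (cs.isRightDescent_iff_not_isRightDescent_mul.mpr hc)
      have hLD : ¬ cs.IsLeftDescent (cs.simple i * w) i :=
        cs.isLeftDescent_iff_not_isLeftDescent_mul.mp hDl
      rw [if_pos hRD, if_neg hLD, if_neg hDr, if_pos hDl, add_zero]
      have h₁ : cs.IsRightDescent w⁻¹ i := cs.isRightDescent_inv_iff.mpr hDl
      have h₂ : ¬ cs.IsLeftDescent w⁻¹ i := fun hc =>
        hDr (cs.isLeftDescent_inv_iff.mp hc)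
      have key : f (Tb (cs.simple i * w⁻¹))
          = q * f (Tb (w⁻¹ * cs.simple i)) + (q - 1) * f (Tb w⁻¹) := by
        rw [← Lsmul i _ h₂, ftr, Rdesc i _ h₁, fsmuladd]
      have hlen1 : cs.length (cs.simple i * w) + 1 = cs.length w :=
        cs.isLeftDescent_iff.mp hDl
      have hlen2 : cs.length (w * cs.simple i) = cs.length w + 1 :=
        cs.not_isRightDescent_iff.mp hDr
      rw [hc2 (w * cs.simple i), hc2 (cs.simple i * w), hc2 w, hinv1, hinv2,
        hPup _ w hlen2, hPdown _ w hlen1, key]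
      field_simp
    · -- right descent, no left descent
      have hRD : ¬ cs.IsRightDescent (w * cs.simple i) i :=
        cs.isRightDescent_iff_not_isRightDescent_mul.mp hDr
      have hLD : cs.IsLeftDescent (cs.simple i * w) i := by
        by_contra hc
        exact hDl (cs.isLeftDescent_iff_not_isLeftDescent_mul.mpr hc)
      rw [if_neg hRD, if_pos hLD, if_pos hDr, if_neg hDl, add_zero]
      have h₁ : ¬ cs.IsRightDescent w⁻¹ i := fun hc =>
        hDl (cs.isRightDescent_inv_iff.mp hc)
      have h₂ : cs.IsLeftDescent w⁻¹ i := cs.isLeftDescent_inv_iff.mpr hDr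
      have key : f (Tb (w⁻¹ * cs.simple i))
          = q * f (Tb (cs.simple i * w⁻¹)) + (q - 1) * f (Tb w⁻¹) := by
        rw [← Rsmul i _ h₁, ftr, Ldesc i _ h₂, fsmuladd]
      have hlen1 : cs.length (cs.simple i * w) = cs.length w + 1 :=
        cs.not_isLeftDescent_iff.mp hDl
      have hlen2 : cs.length (w * cs.simple i) + 1 = cs.length w :=
        cs.isRightDescent_iff.mp hDr
      rw [hc2 (w * cs.simple i), hc2 (cs.simple i * w), hc2 w, hinv1, hinv2,
        hPdown _ w hlen2, hPup _ w hlen1, key]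
      field_simp
    · -- no descents
      have hRD : cs.IsRightDescent (w * cs.simple i) i := by
        by_contra hc
        exact hDr (cs.isRightDescent_iff_not_isRightDescent_mul.mpr hc)
      have hLD : cs.IsLeftDescent (cs.simple i * w) i := by
        by_contra hc
        exact hDl (cs.isLeftDescent_iff_not_isLeftDescent_mul.mpr hc)
      rw [if_pos hRD, if_pos hLD, if_neg hDr, if_neg hDl]
      have h₁ : ¬ cs.IsRightDescent w⁻¹ i := fun hc =>
        hDl (cs.isRightDescent_inv_iff.mp hc)
      have h₂ : ¬ cs.IsLeftDescent w⁻¹ i := fun hc =>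
        hDr (cs.isLeftDescent_inv_iff.mp hc)
      have feq : f (Tb (w⁻¹ * cs.simple i)) = f (Tb (cs.simple i * w⁻¹)) := by
        rw [← Rsmul i _ h₁, ← Lsmul i _ h₂, ftr]
      have hlen1 : cs.length (cs.simple i * w) = cs.length w + 1 :=
        cs.not_isLeftDescent_iff.mp hDl
      have hlen2 : cs.length (w * cs.simple i) = cs.length w + 1 :=
        cs.not_isRightDescent_iff.mp hDr
      rw [hc2 (w * cs.simple i), hc2 (cs.simple i * w), hinv1, hinv2,
        hPup _ w hlen2, hPup _ w hlen1, feq]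
  -- commutation with all basis elements, by induction on length
  have comm_T : ∀ (n : ℕ) (w : W), cs.length w = n → CE' * Tb w = Tb w * CE' := by
    intro n
    induction n using Nat.strong_induction_on with
    | _ n ih =>
      intro w hw
      rcases eq_or_ne w 1 with rfl | hne
      · rw [hT1, mul_one, one_mul]
      · obtain ⟨i, hi⟩ := cs.exists_leftDescent_of_ne_one hne
        have hlen : cs.length (cs.simple i * w) + 1 = cs.length w := cs.isLeftDescent_iff.mp hi
        have hw' : Tb w = Tb (cs.simple i) * Tb (cs.simple i * w) := by
          rw [Lsmul i _ (cs.isLeftDescent_iff_not_isLeftDescent_mul.mp hi),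
            cs.simple_mul_simple_cancel_left]
        have ihw : CE' * Tb (cs.simple i * w) = Tb (cs.simple i * w) * CE' :=
          ih (cs.length (cs.simple i * w)) (by omega) _ rfl
        rw [hw', ← mul_assoc, comm_s i, mul_assoc, ihw, ← mul_assoc]
  -- conclude
  intro h
  rw [← bT.sum_repr h, Finset.sum_mul, Finset.mul_sum]
  refine Finset.sum_congr rfl fun w _ => ?_
  rw [hbT, smul_mul_assoc, mul_smul_comm, comm_T _ w rfl]

set_option synthInstance.maxHeartbeats 1000000 in
/-- for an irreducible module `E^v` of the Hecke algebra over `ℚ(v)`,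
the element `C'_E = Σ_u v^(-2 l u) tr(T_(u⁻¹), E^v) T_u` is central. -/
theorem statement11 {B W H V : Type} [Group W] {M : CoxeterMatrix B} (cs : CoxeterSystem M W)
    [Fintype W] [DecidableEq W]
    [Ring H] [Algebra (RatFunc ℚ) H]
    (Tb : W → H) (bT : Module.Basis W (RatFunc ℚ) H) (hbT : ∀ w, bT w = Tb w)
    (hmul : ∀ w w' : W, cs.length (w * w') = cs.length w + cs.length w' →
      Tb w * Tb w' = Tb (w * w'))
    (hquad : ∀ i : B, (Tb (cs.simple i) + 1) *
      (Tb (cs.simple i) - algebraMap (RatFunc ℚ) H ((RatFunc.X : RatFunc ℚ) ^ 2)) = 0)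
    [AddCommGroup V] [Module (RatFunc ℚ) V] [FiniteDimensional (RatFunc ℚ) V]
    (ρ : H →ₐ[RatFunc ℚ] Module.End (RatFunc ℚ) V)
    [Nontrivial V]
    (hsimple : ∀ U : Submodule (RatFunc ℚ) V,
      (∀ (h : H) (x : V), x ∈ U → ρ h x ∈ U) → U = ⊥ ∨ U = ⊤) :
    let CE' := ∑ u : W, (((RatFunc.X : RatFunc ℚ) ^ (-(2 * (cs.length u) : ℤ))) *
      LinearMap.trace (RatFunc ℚ) V (ρ (Tb u⁻¹))) • Tb u
    ∀ h : H, CE' * h = h * CE' := by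
  exact statement11_aux cs Tb bT hbT hmul hquad ρ
end
end
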